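/- arXiv:1411.4586 — 2 statements merged into one kernel-verified Lean document; each statement's English description precedes it below -/
import Mathlib

section
/- (Remark to Theorem 2.) Under the assumptions of Theorem 2, if additionally the weighted means agree, i.e. Σ_{i=1}^L w_i^x x_i^{(k)} = Σ_{i=1}^M w_i^y y_i^{(k)} for every k = 1, …, N, then D(b_max) converges, as b_max → ∞, to the b_max-independent limit (π^{N/2}/8)(D_y - 2 D_{xy} + D_x). -/
/-!
With the signed weights `w = (w^y, -w^x)` on the combined points `p = (y, x)`, the integrand of
`D` is the square of a single Gaussian mixture, and for `b > 0` its `m`-integral is Gaussian: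
`(√π b)^N ∑ᵢⱼ wᵢ wⱼ exp (-dᵢⱼ / (4b²))` with `dᵢⱼ = ‖pᵢ - pⱼ‖²`. Hence
`D(T) = π^{N/2} ∑ᵢⱼ wᵢ wⱼ K(dᵢⱼ, T)` where `K(d, T) = ∫₀ᵀ b exp (-d / (4b²)) db`.
The substitution `b = √d u` gives `K(d, T) = d K(1, T / √d)`, and comparing with
`b - 1 / (4b)` on `[1, ∞)` gives `K(1, T) = T² / 2 - log T / 4 + J + o(1)`, so
`K(d, T) = T² / 2 - (d / 4) log T + d J + (d / 8) log d + o(1)`.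
The terms that do not converge, and the unknown constant `J`, come with the factors
`∑ᵢⱼ wᵢ wⱼ = (∑ w)²` and `∑ᵢⱼ wᵢ wⱼ dᵢⱼ = 2 (∑ w)(∑ w ‖p‖²) - 2 ‖∑ w p‖²`, and both vanish
because the weights have equal total mass and the means agree.
-/

open MeasureTheory Real Filter

lemma exp_mul_exp_neg_sq_div_eq {b : ℝ} (hb : b ≠ 0) (a c m : ℝ) :
    exp (-(a - m) ^ 2 / (2 * b ^ 2)) * exp (-(c - m) ^ 2 / (2 * b ^ 2))
      = exp (-(a - c) ^ 2 / (4 * b ^ 2)) * exp (-(b ^ 2)⁻¹ * (m - (a + c) / 2) ^ 2) := by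
  rw [← exp_add, ← exp_add]
  congr 1
  field_simp
  ring

lemma integrable_exp_mul_exp_neg_sq_div {b : ℝ} (hb : b ≠ 0) (a c : ℝ) :
    Integrable fun m => exp (-(a - m) ^ 2 / (2 * b ^ 2)) * exp (-(c - m) ^ 2 / (2 * b ^ 2)) := by
  simp only [exp_mul_exp_neg_sq_div_eq hb a c]
  exact ((integrable_exp_neg_mul_sq (by positivity)).comp_sub_right _).const_mul _

lemma integral_exp_mul_exp_neg_sq_div {b : ℝ} (hb : 0 < b) (a c : ℝ) :
    ∫ m, exp (-(a - m) ^ 2 / (2 * b ^ 2)) * exp (-(c - m) ^ 2 / (2 * b ^ 2))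
      = √π * b * exp (-(a - c) ^ 2 / (4 * b ^ 2)) := by
  simp only [exp_mul_exp_neg_sq_div_eq hb.ne' a c]
  rw [integral_const_mul, integral_sub_right_eq_self (fun m => exp (-(b ^ 2)⁻¹ * m ^ 2)),
    integral_gaussian, div_inv_eq_mul, sqrt_mul pi_pos.le, sqrt_sq hb.le]
  ring

noncomputable def gaussianLCD {ι κ : Type*} [Fintype ι] [Fintype κ] (w : ι → ℝ) (p : ι → κ → ℝ)
    (m : κ → ℝ) (b : ℝ) : ℝ :=
  ∑ i, w i * ∏ k, exp (-(p i k - m k) ^ 2 / (2 * b ^ 2))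

section Gaussians

variable {κ : Type*} [Fintype κ] {b : ℝ}

lemma integrable_prod_exp_mul_prod_exp (hb : b ≠ 0) (u v : κ → ℝ) :
    Integrable fun m : κ → ℝ =>
      (∏ k, exp (-(u k - m k) ^ 2 / (2 * b ^ 2))) * ∏ k, exp (-(v k - m k) ^ 2 / (2 * b ^ 2)) := by
  simp only [← Finset.prod_mul_distrib]
  exact Integrable.fintype_prod (f := fun k t => exp (-(u k - t) ^ 2 / (2 * b ^ 2)) *
    exp (-(v k - t) ^ 2 / (2 * b ^ 2))) fun k => integrable_exp_mul_exp_neg_sq_div hb _ _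

lemma integral_prod_exp_mul_prod_exp (hb : 0 < b) (u v : κ → ℝ) :
    ∫ m : κ → ℝ,
      (∏ k, exp (-(u k - m k) ^ 2 / (2 * b ^ 2))) * ∏ k, exp (-(v k - m k) ^ 2 / (2 * b ^ 2))
      = (√π * b) ^ Fintype.card κ * exp (-(∑ k, (u k - v k) ^ 2) / (4 * b ^ 2)) := by
  simp only [← Finset.prod_mul_distrib]
  rw [integral_fintype_prod_volume_eq_prod (f := fun k t => exp (-(u k - t) ^ 2 / (2 * b ^ 2)) *
    exp (-(v k - t) ^ 2 / (2 * b ^ 2)))]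
  simp only [integral_exp_mul_exp_neg_sq_div hb, Finset.prod_mul_distrib, Finset.prod_const,
    Finset.card_univ, mul_pow, ← exp_sum, ← Finset.sum_div, Finset.sum_neg_distrib]

lemma integral_gaussianLCD_sq {ι : Type*} [Fintype ι] (hb : 0 < b) (w : ι → ℝ)
    (p : ι → κ → ℝ) :
    ∫ m, gaussianLCD w p m b ^ 2
      = (√π * b) ^ Fintype.card κ *
          ∑ i, ∑ j, w i * w j * exp (-(∑ k, (p i k - p j k) ^ 2) / (4 * b ^ 2)) := by
  have hsq : ∀ m, gaussianLCD w p m b ^ 2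
      = ∑ i, ∑ j, w i * w j * ((∏ k, exp (-(p i k - m k) ^ 2 / (2 * b ^ 2))) *
          ∏ k, exp (-(p j k - m k) ^ 2 / (2 * b ^ 2))) := by
    intro m
    rw [gaussianLCD, sq, Finset.sum_mul_sum]
    simp only [mul_mul_mul_comm]
  simp only [hsq]
  rw [integral_finsetSum _ fun i _ => integrable_finsetSum _ fun j _ =>
    (integrable_prod_exp_mul_prod_exp hb.ne' _ _).const_mul _]
  simp only [Finset.mul_sum]
  refine Finset.sum_congr rfl fun i _ => ?_
  rw [integral_finsetSum _ fun j _ => (integrable_prod_exp_mul_prod_exp hb.ne' _ _).const_mul _]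
  refine Finset.sum_congr rfl fun j _ => ?_
  rw [integral_const_mul, integral_prod_exp_mul_prod_exp hb]
  ring

end Gaussians

noncomputable def lcdDistance {ι : Type*} [Fintype ι] {N : ℕ} (w : ι → ℝ) (p : ι → Fin N → ℝ)
    (T : ℝ) : ℝ :=
  ∫ b in Set.Ioc 0 T, 1 / b ^ (N - 1) * ∫ m, gaussianLCD w p m b ^ 2

lemma gaussianLCD_sumElim {α β κ : Type*} [Fintype α] [Fintype β] [Fintype κ] (u : α → ℝ)
    (v : β → ℝ) (y : α → κ → ℝ) (x : β → κ → ℝ) (m : κ → ℝ) (b : ℝ) :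
    gaussianLCD (Sum.elim u (-v)) (Sum.elim y x) m b
      = gaussianLCD u y m b - gaussianLCD v x m b := by
  simp [gaussianLCD, Fintype.sum_sum_type, sub_eq_add_neg]

lemma sum_sum_mul_mul_sub_sq {ι : Type*} [Fintype ι] (w a : ι → ℝ) :
    ∑ i, ∑ j, w i * w j * (a i - a j) ^ 2
      = 2 * ((∑ i, w i) * ∑ i, w i * a i ^ 2 - (∑ i, w i * a i) ^ 2) := by
  have h : ∀ i j, w i * w j * (a i - a j) ^ 2
      = w i * a i ^ 2 * w j - 2 * (w i * a i) * (w j * a j) + w i * (w j * a j ^ 2) := by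
    intros; ring
  simp only [h, Finset.sum_add_distrib, Finset.sum_sub_distrib, ← Finset.mul_sum, ← Finset.sum_mul]
  ring

lemma sum_sum_elim_neg_mul {α β P : Type*} [Fintype α] [Fintype β] (u : α → ℝ) (v : β → ℝ)
    (y : α → P) (x : β → P) (f : P → P → ℝ) (hf : ∀ a b, f a b = f b a) :
    ∑ i, ∑ j, Sum.elim u (-v) i * Sum.elim u (-v) j * f (Sum.elim y x i) (Sum.elim y x j)
      = ∑ i, ∑ j, u i * u j * f (y i) (y j) - 2 * ∑ i, ∑ j, v i * u j * f (x i) (y j)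
        + ∑ i, ∑ j, v i * v j * f (x i) (x j) := by
  have hcross : ∑ i, ∑ j, u i * v j * f (y i) (x j) = ∑ i, ∑ j, v i * u j * f (x i) (y j) := by
    rw [Finset.sum_comm]
    simp only [hf (y _), mul_comm (u _)]
  simp only [Fintype.sum_sum_type, Sum.elim_inl, Sum.elim_inr, Pi.neg_apply,
    Finset.sum_add_distrib, neg_mul, mul_neg, Finset.sum_neg_distrib]
  rw [hcross]
  ring

noncomputable def radialKernelIntegral (d T : ℝ) : ℝ := ∫ b in (0:ℝ)..T, b * exp (-d / (4 * b ^ 2))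

lemma intervalIntegrable_mul_exp_neg_div_sq {d : ℝ} (hd : 0 ≤ d) (a c : ℝ) :
    IntervalIntegrable (fun b => b * exp (-d / (4 * b ^ 2))) volume a c := by
  refine (intervalIntegral.intervalIntegrable_id (a := a) (b := c)).mono_fun
    (by fun_prop) (ae_of_all _ fun b => ?_)
  simp only [norm_mul, norm_eq_abs, abs_exp]
  refine mul_le_of_le_one_right (abs_nonneg b) (exp_le_one_iff.2 ?_)
  rw [neg_div]
  exact neg_nonpos.2 (by positivity)

lemma radialKernelIntegral_zero (T : ℝ) : radialKernelIntegral 0 T = T ^ 2 / 2 := by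
  simp [radialKernelIntegral, integral_id]

lemma radialKernelIntegral_sq_mul {s : ℝ} (hs : 0 < s) (T : ℝ) :
    radialKernelIntegral (s ^ 2) T = s ^ 2 * radialKernelIntegral 1 (T / s) := by
  have hsub : ∀ b, b * exp (-s ^ 2 / (4 * b ^ 2)) = s * (b / s * exp (-1 / (4 * (b / s) ^ 2))) := by
    intro b
    rcases eq_or_ne b 0 with rfl | hb
    · simp
    · field_simp
  simp only [radialKernelIntegral, hsub, intervalIntegral.integral_const_mul,
    intervalIntegral.integral_comp_div (fun u => u * exp (-1 / (4 * u ^ 2))) hs.ne', zero_div,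
    smul_eq_mul]
  ring

lemma integrableOn_Ioi_one_radialRemainder :
    IntegrableOn (fun b => b * (exp (-1 / (4 * b ^ 2)) - 1 + 1 / (4 * b ^ 2))) (Set.Ioi 1) := by
  refine ((integrableOn_Ioi_rpow_of_lt (by norm_num : (-3:ℝ) < -1) one_pos).const_mul
    (1 / 16)).mono' (by fun_prop) ?_
  filter_upwards [ae_restrict_mem measurableSet_Ioi] with b (hb : 1 < b)
  have hb0 : 0 < b := one_pos.trans hb
  set u := 1 / (4 * b ^ 2) with hu
  have hu0 : 0 ≤ u := by positivity
  have hu1 : u ≤ 1 := by rw [hu, div_le_one (by positivity)]; nlinarith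
  have hexp : |exp (-u) - 1 - (-u)| ≤ u ^ 2 := by
    simpa using abs_exp_sub_one_sub_id_le (x := -u) (by rwa [abs_neg, abs_of_nonneg hu0])
  rw [norm_eq_abs, abs_mul, abs_of_pos hb0, neg_div, ← hu, rpow_neg hb0.le,
    show (3:ℝ) = ((3:ℕ):ℝ) by norm_num, rpow_natCast]
  calc b * |exp (-u) - 1 + u| ≤ b * u ^ 2 := by
        rw [show exp (-u) - 1 + u = exp (-u) - 1 - (-u) by ring]
        exact mul_le_mul_of_nonneg_left hexp hb0.le
    _ = 1 / 16 * (b ^ 3)⁻¹ := by rw [hu]; field_simp; ring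

lemma exists_tendsto_radialKernelIntegral_one :
    ∃ J, Tendsto (fun T => radialKernelIntegral 1 T - T ^ 2 / 2 + log T / 4) atTop (nhds J) := by
  set r := fun b : ℝ => b * (exp (-1 / (4 * b ^ 2)) - 1 + 1 / (4 * b ^ 2))
  refine ⟨radialKernelIntegral 1 1 - 1 / 2 + ∫ b in Set.Ioi 1, r b,
    ((intervalIntegral_tendsto_integral_Ioi 1 integrableOn_Ioi_one_radialRemainder
      tendsto_id).const_add (radialKernelIntegral 1 1 - 1 / 2)).congr' ?_⟩
  filter_upwards [eventually_ge_atTop 1] with T hT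
  have hT0 : 0 < T := one_pos.trans_le hT
  have hr : ∀ b, r b = (b * exp (-1 / (4 * b ^ 2)) - b) + 1 / 4 * b⁻¹ := by
    intro b
    rcases eq_or_ne b 0 with rfl | hb
    · simp [r]
    · simp only [r]
      field_simp
  have hint : ∫ b in (1:ℝ)..T, r b
      = (∫ b in (1:ℝ)..T, b * exp (-1 / (4 * b ^ 2))) - (T ^ 2 - 1) / 2 + log T / 4 := by
    simp only [hr]
    rw [intervalIntegral.integral_add, intervalIntegral.integral_sub, integral_id,
      intervalIntegral.integral_const_mul, integral_inv_of_pos one_pos hT0, div_one]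
    · ring
    · exact intervalIntegrable_mul_exp_neg_div_sq zero_le_one _ _
    · exact intervalIntegral.intervalIntegrable_id
    · exact (intervalIntegrable_mul_exp_neg_div_sq zero_le_one _ _).sub
        intervalIntegral.intervalIntegrable_id
    · refine (intervalIntegral.intervalIntegrable_inv (fun b hb => ?_) continuousOn_id).const_mul _
      rw [Set.uIcc_of_le hT] at hb
      exact (one_pos.trans_le hb.1).ne'
  have hsplit := intervalIntegral.integral_add_adjacent_intervals
    (intervalIntegrable_mul_exp_neg_div_sq zero_le_one 0 1)
    (intervalIntegrable_mul_exp_neg_div_sq zero_le_one 1 T)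
  show radialKernelIntegral 1 1 - 1 / 2 + ∫ b in (1:ℝ)..T, r b = _
  rw [hint, radialKernelIntegral, radialKernelIntegral, ← hsplit]
  ring

lemma exists_tendsto_radialKernelIntegral :
    ∃ J, ∀ d, 0 ≤ d → Tendsto (fun T => radialKernelIntegral d T - T ^ 2 / 2 + d / 4 * log T)
      atTop (nhds (d * J + d * log d / 8)) := by
  obtain ⟨J, hJ⟩ := exists_tendsto_radialKernelIntegral_one
  refine ⟨J, fun d hd => ?_⟩
  rcases hd.eq_or_lt with rfl | hd
  · simp [radialKernelIntegral_zero]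
  set s := √d
  have hs : 0 < s := sqrt_pos.2 hd
  have hs2 : s ^ 2 = d := sq_sqrt hd.le
  have hlim := (hJ.comp (tendsto_id.atTop_div_const hs)).const_mul d |>.add_const (d * log s / 4)
  rw [show d * J + d * log d / 8 = d * J + d * log s / 4 by rw [log_sqrt hd.le]; ring]
  refine hlim.congr' ?_
  filter_upwards [eventually_gt_atTop 0] with T hT
  have hK : radialKernelIntegral d T = d * radialKernelIntegral 1 (T / s) := by
    rw [← hs2]; exact radialKernelIntegral_sq_mul hs T
  simp only [Function.comp, id, hK, log_div hT.ne' hs.ne']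
  field_simp
  rw [hs2]
  ring

lemma tendsto_sum_mul_radialKernelIntegral {ι : Type*} [Fintype ι] (c d : ι → ℝ) (hd : ∀ i, 0 ≤ d i)
    (hc : ∑ i, c i = 0) (hcd : ∑ i, c i * d i = 0) :
    Tendsto (fun T => ∑ i, c i * radialKernelIntegral (d i) T) atTop
      (nhds ((∑ i, c i * (d i * log (d i))) / 8)) := by
  obtain ⟨J, hJ⟩ := exists_tendsto_radialKernelIntegral
  have hlim := tendsto_finsetSum Finset.univ fun i _ => (hJ (d i) (hd i)).const_mul (c i)
  have hval : ∑ i, c i * (d i * J + d i * log (d i) / 8) = (∑ i, c i * (d i * log (d i))) / 8 := by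
    simp only [mul_add, Finset.sum_add_distrib, ← mul_assoc, ← Finset.sum_mul, hcd, zero_mul,
      zero_add, Finset.sum_div, mul_div_assoc]
  have hfun : ∀ T, ∑ i, c i * (radialKernelIntegral (d i) T - T ^ 2 / 2 + d i / 4 * log T)
      = ∑ i, c i * radialKernelIntegral (d i) T := by
    intro T
    simp only [mul_add, mul_sub, Finset.sum_add_distrib, Finset.sum_sub_distrib, ← Finset.sum_mul,
      ← mul_assoc, ← mul_div_assoc, ← Finset.sum_div, hc, hcd]
    ring
  rw [← hval]
  exact hlim.congr hfun

section LCDDistance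

variable {ι : Type*} [Fintype ι] {N : ℕ} (w : ι → ℝ) (p : ι → Fin N → ℝ)

lemma one_div_pow_mul_integral_gaussianLCD_sq (hN : 1 ≤ N) {b : ℝ} (hb : 0 < b) :
    1 / b ^ (N - 1) * ∫ m, gaussianLCD w p m b ^ 2
      = π ^ ((N : ℝ) / 2) *
          ∑ i, ∑ j, w i * w j * (b * exp (-(∑ k, (p i k - p j k) ^ 2) / (4 * b ^ 2))) := by
  have hpow : (√π * b) ^ N = π ^ ((N : ℝ) / 2) * (b ^ (N - 1) * b) := by
    rw [← pow_succ, Nat.sub_add_cancel hN, mul_pow, sqrt_eq_rpow, ← rpow_natCast,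
      ← rpow_mul pi_pos.le]
    ring_nf
  simp only [integral_gaussianLCD_sq hb, Fintype.card_fin, hpow, Finset.mul_sum]
  have : b ^ (N - 1) ≠ 0 := by positivity
  field_simp

lemma lcdDistance_eq {T : ℝ} (hN : 1 ≤ N) (hT : 0 ≤ T) :
    lcdDistance w p T = π ^ ((N : ℝ) / 2) *
      ∑ i, ∑ j, w i * w j * radialKernelIntegral (∑ k, (p i k - p j k) ^ 2) T := by
  have hint : ∀ i j, IntegrableOn
      (fun b => w i * w j * (b * exp (-(∑ k, (p i k - p j k) ^ 2) / (4 * b ^ 2)))) (Set.Ioc 0 T) :=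
    fun i j => ((intervalIntegrable_iff_integrableOn_Ioc_of_le hT).1
      (intervalIntegrable_mul_exp_neg_div_sq (by positivity) 0 T)).const_mul _
  rw [lcdDistance, setIntegral_congr_fun measurableSet_Ioc
    fun b hb => one_div_pow_mul_integral_gaussianLCD_sq w p hN hb.1, integral_const_mul,
    integral_finsetSum _ fun i _ => integrable_finsetSum _ fun j _ => hint i j]
  simp only [integral_finsetSum _ fun j _ => hint _ j, integral_const_mul, radialKernelIntegral,
    intervalIntegral.integral_of_le hT]

theorem tendsto_lcdDistance (hN : 1 ≤ N) (hw : ∑ i, w i = 0) (hp : ∀ k, ∑ i, w i * p i k = 0) :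
    Tendsto (lcdDistance w p) atTop (nhds (π ^ ((N : ℝ) / 2) / 8 *
      ∑ i, ∑ j, w i * w j * ((∑ k, (p i k - p j k) ^ 2) * log (∑ k, (p i k - p j k) ^ 2)))) := by
  set d : ι × ι → ℝ := fun q => ∑ k, (p q.1 k - p q.2 k) ^ 2
  have hc : ∑ q : ι × ι, w q.1 * w q.2 = 0 := by
    rw [Fintype.sum_prod_type, ← Finset.sum_mul_sum, hw, zero_mul]
  have hcd : ∑ q : ι × ι, w q.1 * w q.2 * d q = 0 := by
    calc ∑ q : ι × ι, w q.1 * w q.2 * d q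
        = ∑ k, ∑ i, ∑ j, w i * w j * (p i k - p j k) ^ 2 := by
          simp only [d, Fintype.sum_prod_type, Finset.mul_sum]
          exact (Finset.sum_congr rfl fun i _ => Finset.sum_comm).trans Finset.sum_comm
      _ = 0 := by simp [sum_sum_mul_mul_sub_sq, hw, hp]
  have hlim := (tendsto_sum_mul_radialKernelIntegral _ d (fun q => by positivity) hc hcd).const_mul
    (π ^ ((N : ℝ) / 2))
  convert hlim.congr' ?_ using 2
  · simp only [d, Fintype.sum_prod_type]
    ring
  · filter_upwards [eventually_ge_atTop 0] with T hT
    simp only [lcdDistance_eq w p hN hT, d, Fintype.sum_prod_type]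

end LCDDistance

theorem distance_limit_equal_means_general
    (N M L : ℕ) (hN : 1 ≤ N)
    (y : Fin M → Fin N → ℝ) (wy : Fin M → ℝ)
    (hsy : ∑ i, wy i = 1)
    (x : Fin L → Fin N → ℝ) (wx : Fin L → ℝ)
    (hsx : ∑ i, wx i = 1)
    (hmeans : ∀ k : Fin N, ∑ i, wx i * x i k = ∑ i, wy i * y i k)
    (xlog : ℝ → ℝ) (hxlog0 : xlog 0 = 0)
    (hxlog : ∀ z : ℝ, 0 < z → xlog z = z * Real.log z) :
    Filter.Tendsto (fun bmax : ℝ =>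
      ∫ b in Set.Ioc (0:ℝ) bmax, (1 / b ^ (N - 1)) *
          ∫ m : Fin N → ℝ,
            ((∑ i, wy i * ∏ k, Real.exp (-(y i k - m k) ^ 2 / (2 * b ^ 2)))
              - ∑ i, wx i * ∏ k, Real.exp (-(x i k - m k) ^ 2 / (2 * b ^ 2))) ^ 2)
      Filter.atTop
      (nhds (Real.pi ^ ((N : ℝ) / 2) / 8 *
        ((∑ i, ∑ j, wy i * wy j * xlog (∑ k, (y i k - y j k) ^ 2))
          - 2 * ∑ i, ∑ j, wx i * wy j * xlog (∑ k, (x i k - y j k) ^ 2)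
          + ∑ i, ∑ j, wx i * wx j * xlog (∑ k, (x i k - x j k) ^ 2)))) := by
  set w := Sum.elim wy (-wx)
  set p := Sum.elim y x
  have hw : ∑ i, w i = 0 := by simp [w, Fintype.sum_sum_type, hsy, hsx]
  have hp : ∀ k, ∑ i, w i * p i k = 0 := fun k => by
    simp [w, p, Fintype.sum_sum_type, hmeans k]
  have hxlog' : ∀ z : ℝ, 0 ≤ z → z * log z = xlog z := fun z hz => by
    rcases hz.eq_or_lt with rfl | hz
    · simp [hxlog0]
    · exact (hxlog z hz).symm
  convert tendsto_lcdDistance w p hN hw hp using 2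
  · simp only [lcdDistance, w, p, gaussianLCD_sumElim]
    rfl
  · rw [← sum_sum_elim_neg_mul wy wx y x (fun a c => xlog (∑ k, (a k - c k) ^ 2))
      fun a c => by simp only [← neg_sub (a _), neg_sq]]
    simp only [← hxlog' _ (Finset.sum_nonneg fun _ _ => sq_nonneg _), w, p]

theorem distance_limit_equal_means
    (N M L : ℕ) (hN : 1 ≤ N)
    (y : Fin M → Fin N → ℝ) (wy : Fin M → ℝ) (hwy : ∀ i, 0 < wy i)
    (hsy : ∑ i, wy i = 1)
    (x : Fin L → Fin N → ℝ) (wx : Fin L → ℝ) (hwx : ∀ i, 0 < wx i)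
    (hsx : ∑ i, wx i = 1)
    (hmeans : ∀ k : Fin N, ∑ i, wx i * x i k = ∑ i, wy i * y i k)
    (xlog : ℝ → ℝ) (hxlog0 : xlog 0 = 0)
    (hxlog : ∀ z : ℝ, 0 < z → xlog z = z * Real.log z) :
    Filter.Tendsto (fun bmax : ℝ =>
      ∫ b in Set.Ioc (0:ℝ) bmax, (1 / b ^ (N - 1)) *
          ∫ m : Fin N → ℝ,
            ((∑ i, wy i * ∏ k, Real.exp (-(y i k - m k) ^ 2 / (2 * b ^ 2)))
              - ∑ i, wx i * ∏ k, Real.exp (-(x i k - m k) ^ 2 / (2 * b ^ 2))) ^ 2)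
      Filter.atTop
      (nhds (Real.pi ^ ((N : ℝ) / 2) / 8 *
        ((∑ i, ∑ j, wy i * wy j * xlog (∑ k, (y i k - y j k) ^ 2))
          - 2 * ∑ i, ∑ j, wx i * wy j * xlog (∑ k, (x i k - y j k) ^ 2)
          + ∑ i, ∑ j, wx i * wx j * xlog (∑ k, (x i k - x j k) ^ 2)))) :=
  distance_limit_equal_means_general N M L hN y wy hsy x wx hsx hmeans xlog hxlog0 hxlog
end

section
/- (Theorem 4, large-b_max gradient.) Let N ≥ 1, let y_1, …, y_M ∈ ℝ^N with positive weights w_i^y summing to one, let x_1, …, x_L ∈ ℝ^N with positive weights w_i^x summing to one, and fix ξ ∈ {1,…,L}, η ∈ {1,…,N} with x_ξ ≠ y_i for all i and x_ξ ≠ x_i for all i ≠ ξ. For b_max > 0 let G_ξ^{(η)}(b_max) = (π^{N/2}/2) w_ξ^x [ Σ_{i=1}^L w_i^x (x_ξ^{(η)} - x_i^{(η)}) Ei(-‖x_ξ - x_i‖²/(4 b_max²)) - Σ_{i=1}^M w_i^y (x_ξ^{(η)} - y_i^{(η)}) Ei(-‖x_ξ - y_i‖²/(4 b_max²)) ] be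 the exact partial derivative of the distance from Theorem 3 (the i = ξ term interpreted as 0). Then, as b_max → ∞, G_ξ^{(η)}(b_max) - (π^{N/2}/2) w_ξ^x [ Σ_{i=1}^L w_i^x (x_ξ^{(η)} - x_i^{(η)}) log(‖x_ξ - x_i‖²) - Σ_{i=1}^M w_i^y (x_ξ^{(η)} - y_i^{(η)}) log(‖x_ξ - y_i‖²) + C_{b_max} · (Σ_{i=1}^L w_i^x x_i^{(η)} - Σ_{i=1}^M w_i^y y_i^{(η)}) ] tends to 0, where C_{b_max} = log(4 b_max²) - γ and the i = ξ term of the first sum is interpreted as 0. -/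
/-!
As `z → 0⁺`, `Ei(-z) = log z + γ + o(1)`: integrating by parts,
`∫_z^∞ e^{-t} log t dt = e^{-z} log z - Ei(-z)`, and the left side tends to
`∫_0^∞ e^{-t} log t dt = Γ'(1) = -γ`. With `z = ‖x_ξ - p‖² / (4 b_max²)` every `Ei` term
becomes `log ‖x_ξ - p‖² - C_{b_max} + o(1)`. Since the weights sum to one,
`∑ w_i (x_ξ^{(η)} - p_i^{(η)}) = x_ξ^{(η)} - ∑ w_i p_i^{(η)}`, so the `C_{b_max}` terms add
up to `C_{b_max} (∑ w^x x^{(η)} - ∑ w^y y^{(η)})`. A term with `p = x_ξ` vanishes through its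
factor `x_ξ^{(η)} - p^{(η)}`.
-/

open MeasureTheory Real Filter

/-- `negEi z` is the exponential integral `Ei(-z)`, defined for `z > 0` by
`Ei(-z) = -∫_z^∞ (e^{-t}/t) dt`. -/
noncomputable def negEi (z : ℝ) : ℝ := -∫ t in Set.Ioi z, Real.exp (-t) / t

open Set Topology

theorem integrableOn_exp_neg_div_Ioi {z : ℝ} (hz : 0 < z) :
    IntegrableOn (fun t => exp (-t) / t) (Ioi z) := by
  refine Integrable.mono' ((exp_neg_integrableOn_Ioi z one_pos).div_const z)
    ((continuousOn_of_forall_continuousAt fun t ht => ?_).aestronglyMeasurable measurableSet_Ioi)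
    (ae_restrict_of_forall_mem measurableSet_Ioi fun t (ht : z < t) => ?_)
  · exact (continuous_exp.comp continuous_neg).continuousAt.div continuousAt_id (hz.trans ht).ne'
  · rw [norm_of_nonneg (div_pos (exp_pos _) (hz.trans ht)).le, neg_one_mul]
    exact div_le_div_of_nonneg_left (exp_pos _).le hz ht.le

theorem abs_log_le_rpow_neg_half_add_rpow_half {t : ℝ} (ht : 0 < t) :
    |log t| ≤ 2 * t ^ (-(1 / 2) : ℝ) + 2 * t ^ (1 / 2 : ℝ) := by
  have hupper : log t ≤ 2 * t ^ (1 / 2 : ℝ) := by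
    have := log_le_rpow_div ht.le (ε := 1 / 2) (by norm_num); linarith
  have hlower : -log t ≤ 2 * t ^ (-(1 / 2) : ℝ) := by
    have := log_le_rpow_div (inv_pos.mpr ht).le (ε := 1 / 2) (by norm_num)
    rw [log_inv, inv_rpow ht.le, ← rpow_neg ht.le] at this
    linarith
  have : 0 ≤ t ^ (1 / 2 : ℝ) := by positivity
  have : 0 ≤ t ^ (-(1 / 2) : ℝ) := by positivity
  exact abs_le.mpr ⟨by linarith, by linarith⟩

theorem integrableOn_log_mul_exp_neg_Ioi :
    IntegrableOn (fun t => log t * exp (-t)) (Ioi 0) := by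
  have hΓ (s : ℝ) (hs : 0 < s) : IntegrableOn (fun t => 2 * (exp (-t) * t ^ (s - 1))) (Ioi 0) :=
    (GammaIntegral_convergent hs).const_mul 2
  have hdom := (hΓ (1 / 2) (by norm_num)).add (hΓ (3 / 2) (by norm_num))
  norm_num at hdom
  refine Integrable.mono' hdom
    ((continuousOn_of_forall_continuousAt fun t (ht : 0 < t) =>
      (continuousAt_log ht.ne').mul (continuous_exp.comp continuous_neg).continuousAt)
      |>.aestronglyMeasurable measurableSet_Ioi)
    (ae_restrict_of_forall_mem measurableSet_Ioi fun t (ht : 0 < t) => ?_)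
  rw [Pi.add_apply, norm_mul, norm_eq_abs, norm_of_nonneg (exp_pos _).le]
  calc |log t| * exp (-t) ≤ (2 * t ^ (-(1 / 2) : ℝ) + 2 * t ^ (1 / 2 : ℝ)) * exp (-t) :=
        mul_le_mul_of_nonneg_right (abs_log_le_rpow_neg_half_add_rpow_half ht) (exp_pos _).le
    _ = _ := by ring

theorem integral_log_mul_exp_neg_Ioi_zero :
    ∫ t in Ioi 0, log t * exp (-t) = -eulerMascheroniConstant := by
  have hcomplex := Complex.hasDerivAt_GammaIntegral (s := 1) (by norm_num)
  have hreal : HasDerivAt (fun s : ℝ => (Complex.GammaIntegral s).re)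
      (∫ t in Ioi 0, log t * exp (-t)) 1 := by
    have hintegral : ∫ t : ℝ in Ioi 0, (t : ℂ) ^ ((1 : ℂ) - 1) * (log t * exp (-t))
        = ((∫ t in Ioi 0, log t * exp (-t) : ℝ) : ℂ) := by
      rw [← integral_complex_ofReal]
      refine integral_congr_ae (ae_of_all _ fun t => ?_)
      simp
    rw [hintegral] at hcomplex
    simpa only [Complex.ofReal_re] using hcomplex.real_of_complex
  have hGamma : Gamma =ᶠ[𝓝 1] fun s : ℝ => (Complex.GammaIntegral s).re := by
    filter_upwards [Ioi_mem_nhds one_pos] with s (hs : 0 < s)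
    rw [← Complex.Gamma_eq_integral (by simpa using hs), Complex.Gamma_ofReal, Complex.ofReal_re]
  exact (hreal.congr_of_eventuallyEq hGamma).unique hasDerivAt_Gamma_one

theorem tendsto_log_mul_exp_neg_atTop : Tendsto (fun t => log t * exp (-t)) atTop (𝓝 0) :=
  (isLittleO_log_id_atTop.mul_isBigO (Asymptotics.isBigO_refl (fun t => exp (-t)) atTop))
    |>.trans_tendsto (by simpa using tendsto_pow_mul_exp_neg_atTop_nhds_zero 1)

theorem integral_log_mul_exp_neg_Ioi {z : ℝ} (hz : 0 < z) :
    ∫ t in Ioi z, log t * exp (-t) = log z * exp (-z) - negEi z := by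
  have hv (t : ℝ) : HasDerivAt (fun s => -exp (-s)) (exp (-t)) t := by
    simpa using ((hasDerivAt_neg t).exp).fun_neg
  have hparts := integral_Ioi_mul_deriv_eq_deriv_mul (u := log) (u' := fun t => t⁻¹) (b' := 0)
    (fun t (ht : z < t) => hasDerivAt_log (hz.trans ht).ne') (fun t _ => hv t)
    (integrableOn_log_mul_exp_neg_Ioi.mono_set (Ioi_subset_Ioi hz.le))
    ((integrableOn_exp_neg_div_Ioi hz).neg.congr_fun (fun t _ => by simp [div_eq_inv_mul])
      measurableSet_Ioi)
    (((continuousAt_log hz.ne').mul (hv z).continuousAt).tendsto.mono_left nhdsWithin_le_nhds)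
    (by simpa [Pi.mul_def] using tendsto_log_mul_exp_neg_atTop.neg)
  rw [hparts, negEi]
  simp only [Pi.mul_apply, mul_neg, inv_mul_eq_div, integral_neg]
  ring

theorem tendsto_exp_neg_sub_one_mul_log_nhdsGT_zero :
    Tendsto (fun z => (exp (-z) - 1) * log z) (𝓝[>] 0) (𝓝 0) := by
  have hmul_log : Tendsto (fun z => 2 * ‖z * log z‖) (𝓝[>] 0) (𝓝 0) := by
    simpa using ((continuous_mul_log.norm.const_mul 2).tendsto 0).mono_left nhdsWithin_le_nhds
  refine squeeze_zero_norm' ?_ hmul_log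
  filter_upwards [Ioo_mem_nhdsGT one_pos] with z ⟨hz0, hz1⟩
  have hexp : |exp (-z) - 1| ≤ 2 * |z| := by
    simpa using abs_exp_sub_one_le (x := -z) (by rw [abs_neg, abs_of_pos hz0]; exact hz1.le)
  simp only [norm_mul, norm_eq_abs]
  calc |exp (-z) - 1| * |log z| ≤ 2 * |z| * |log z| := by gcongr
    _ = _ := by ring

theorem tendsto_negEi_sub_log_nhdsGT_zero :
    Tendsto (fun z => negEi z - log z) (𝓝[>] 0) (𝓝 eulerMascheroniConstant) := by
  have htail : Tendsto (fun z => ∫ t in Ioi z, log t * exp (-t)) (𝓝[>] 0)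
      (𝓝 (-eulerMascheroniConstant)) := by
    rw [← integral_log_mul_exp_neg_Ioi_zero]
    exact integrableOn_log_mul_exp_neg_Ioi.continuousWithinAt_Ici_primitive_Ioi.mono_left
      (nhdsWithin_mono _ Ioi_subset_Ici_self)
  have hsum := tendsto_exp_neg_sub_one_mul_log_nhdsGT_zero.sub htail
  rw [zero_sub, neg_neg] at hsum
  refine hsum.congr' ?_
  filter_upwards [self_mem_nhdsWithin] with z (hz : 0 < z)
  rw [integral_log_mul_exp_neg_Ioi hz]
  ring

theorem tendsto_negEi_div_sub_log_add_log_sub_eulerMascheroni {a : ℝ} (ha : 0 < a) :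
    Tendsto (fun b => negEi (a / (4 * b ^ 2)) - log a
      + (log (4 * b ^ 2) - eulerMascheroniConstant)) atTop (𝓝 0) := by
  have hscale : Tendsto (fun b : ℝ => 4 * b ^ 2) atTop atTop :=
    (tendsto_pow_atTop two_ne_zero).const_mul_atTop four_pos
  have harg : Tendsto (fun b : ℝ => a / (4 * b ^ 2)) atTop (𝓝[>] 0) :=
    tendsto_nhdsWithin_iff.mpr ⟨tendsto_const_nhds.div_atTop hscale,
      (hscale.eventually_gt_atTop 0).mono fun b hb => div_pos ha hb⟩
  have hlim := (tendsto_negEi_sub_log_nhdsGT_zero.comp harg).sub_const eulerMascheroniConstant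
  rw [sub_self] at hlim
  refine hlim.congr' ((hscale.eventually_gt_atTop 0).mono fun b hb => ?_)
  rw [Function.comp_apply, log_div ha.ne' hb.ne']
  ring

theorem tendsto_sub_mul_negEi_sqDist_sub_log_add_log_sub_eulerMascheroni {ι : Type*} [Fintype ι]
    (u v : ι → ℝ) (η : ι) :
    Tendsto (fun b => (u η - v η) * (negEi ((∑ k, (u k - v k) ^ 2) / (4 * b ^ 2))
      - log (∑ k, (u k - v k) ^ 2) + (log (4 * b ^ 2) - eulerMascheroniConstant)))
      atTop (𝓝 0) := by
  by_cases huv : u = v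
  · simp [huv]
  obtain ⟨k, hk⟩ := Function.ne_iff.mp huv
  have hpos : 0 < ∑ k, (u k - v k) ^ 2 :=
    Finset.sum_pos' (fun _ _ => sq_nonneg _)
      ⟨k, Finset.mem_univ k, sq_pos_of_ne_zero (sub_ne_zero.mpr hk)⟩
  simpa using (tendsto_negEi_div_sub_log_add_log_sub_eulerMascheroni hpos).const_mul (u η - v η)

theorem sum_mul_sub_mul_add {ι : Type*} [Fintype ι] {w : ι → ℝ} (hw : ∑ i, w i = 1)
    (q C : ℝ) (p A : ι → ℝ) :
    ∑ i, w i * ((q - p i) * (A i + C))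
      = ∑ i, w i * (q - p i) * A i + C * (q - ∑ i, w i * p i) := by
  have hmean : ∑ i, w i * (q - p i) = q - ∑ i, w i * p i := by
    simp only [mul_sub, Finset.sum_sub_distrib, ← Finset.sum_mul, hw, one_mul]
  rw [← hmean, Finset.mul_sum, ← Finset.sum_add_distrib]
  exact Finset.sum_congr rfl fun i _ => by ring

theorem gradient_large_bmax_expansion_general
    (N M L : ℕ)
    (y : Fin M → Fin N → ℝ) (wy : Fin M → ℝ)
    (hsy : ∑ i, wy i = 1)
    (x : Fin L → Fin N → ℝ) (wx : Fin L → ℝ)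
    (hsx : ∑ i, wx i = 1)
    (ξ : Fin L) (η : Fin N) :
    Filter.Tendsto (fun bmax : ℝ =>
      (Real.pi ^ ((N : ℝ) / 2) / 2 * wx ξ *
        ((∑ i, wx i * (x ξ η - x i η) * negEi ((∑ k, (x ξ k - x i k) ^ 2) / (4 * bmax ^ 2)))
          - ∑ i, wy i * (x ξ η - y i η) * negEi ((∑ k, (x ξ k - y i k) ^ 2) / (4 * bmax ^ 2))))
      - (Real.pi ^ ((N : ℝ) / 2) / 2 * wx ξ *
          ((∑ i, wx i * (x ξ η - x i η) * Real.log (∑ k, (x ξ k - x i k) ^ 2))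
            - (∑ i, wy i * (x ξ η - y i η) * Real.log (∑ k, (x ξ k - y i k) ^ 2))
            + (Real.log (4 * bmax ^ 2) - Real.eulerMascheroniConstant) *
                (∑ i, wx i * x i η - ∑ i, wy i * y i η))))
      Filter.atTop (nhds 0) := by
  have hx := tendsto_finsetSum Finset.univ fun i _ =>
    (tendsto_sub_mul_negEi_sqDist_sub_log_add_log_sub_eulerMascheroni (x ξ) (x i) η).const_mul
      (wx i)
  have hy := tendsto_finsetSum Finset.univ fun i _ =>
    (tendsto_sub_mul_negEi_sqDist_sub_log_add_log_sub_eulerMascheroni (x ξ) (y i) η).const_mul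
      (wy i)
  have hlim := (hx.sub hy).const_mul (π ^ ((N : ℝ) / 2) / 2 * wx ξ)
  simp only [mul_zero, Finset.sum_const_zero, sub_zero] at hlim
  refine hlim.congr fun b => ?_
  rw [sum_mul_sub_mul_add hsx, sum_mul_sub_mul_add hsy]
  simp only [mul_sub, Finset.sum_sub_distrib]
  ring

theorem gradient_large_bmax_expansion
    (N M L : ℕ) (hN : 1 ≤ N)
    (y : Fin M → Fin N → ℝ) (wy : Fin M → ℝ) (hwy : ∀ i, 0 < wy i)
    (hsy : ∑ i, wy i = 1)
    (x : Fin L → Fin N → ℝ) (wx : Fin L → ℝ) (hwx : ∀ i, 0 < wx i)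
    (hsx : ∑ i, wx i = 1)
    (ξ : Fin L) (η : Fin N)
    (hxy : ∀ i, x ξ ≠ y i) (hxx : ∀ i, i ≠ ξ → x ξ ≠ x i) :
    Filter.Tendsto (fun bmax : ℝ =>
      (Real.pi ^ ((N : ℝ) / 2) / 2 * wx ξ *
        ((∑ i, wx i * (x ξ η - x i η) * negEi ((∑ k, (x ξ k - x i k) ^ 2) / (4 * bmax ^ 2)))
          - ∑ i, wy i * (x ξ η - y i η) * negEi ((∑ k, (x ξ k - y i k) ^ 2) / (4 * bmax ^ 2))))
      - (Real.pi ^ ((N : ℝ) / 2) / 2 * wx ξ *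
          ((∑ i, wx i * (x ξ η - x i η) * Real.log (∑ k, (x ξ k - x i k) ^ 2))
            - (∑ i, wy i * (x ξ η - y i η) * Real.log (∑ k, (x ξ k - y i k) ^ 2))
            + (Real.log (4 * bmax ^ 2) - Real.eulerMascheroniConstant) *
                (∑ i, wx i * x i η - ∑ i, wy i * y i η))))
      Filter.atTop (nhds 0) :=
  gradient_large_bmax_expansion_general N M L y wy hsy x wx hsx ξ η
end
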